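/- Let h : St(r,n,ℂ) → ℝ be twice continuously differentiable and unitarily invariant, i.e. h(UR) = h(U) for every R ∈ U(r). If U is a stationary point of h, then for all 1 ≤ p < q ≤ r the tangent vectors Z_{p,q} = i·U(e_p e_q^T + e_q e_p^T) and Z'_{p,q} = U(e_p e_q^T − e_q e_p^T) lie in the kernel of the Riemannian Hessian of h at U. Consequently rank(Hess h(U)) ≤ 2r(n−r). -/

import Mathlib

/-!
Differentiating the invariance `h (W R) = h W` shows that the Euclidean gradient is equivariant,
`g (W R) = g W R` for unitary `R`. Differentiating this once more along the unitary curve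
`t ↦ U exp (t Ω)`, `Ω` skew-Hermitian, gives `Dg(U)[U Ω] = g(U) Ω`. At a stationary point
`g U = U S` with `S` Hermitian, and the projected Euclidean Hessian and the Weingarten term then
cancel on `U Ω`. So the Hessian kills the `r²`-dimensional vertical space `{U Ω}`, and on the
tangent space it factors through the horizontal space `ker (Z ↦ Uᴴ Z)`, of dimension `2r(n-r)`.
-/

open Matrix

noncomputable section

/-- Hermitian part `sym(A) = (A + Aᴴ)/2`. -/
def symPart {r : ℕ} (A : Matrix (Fin r) (Fin r) ℂ) : Matrix (Fin r) (Fin r) ℂ :=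
  (1 / 2 : ℂ) • (A + Aᴴ)

/-- Projection onto the tangent space of the Stiefel manifold at `U`. -/
def stiefelProj {n r : ℕ} (U Z : Matrix (Fin n) (Fin r) ℂ) : Matrix (Fin n) (Fin r) ℂ :=
  Z - U * symPart (Uᴴ * Z)

/-- Weingarten operator of the Stiefel manifold. -/
def weingarten {n r : ℕ} (U Z V : Matrix (Fin n) (Fin r) ℂ) : Matrix (Fin n) (Fin r) ℂ :=
  -(Z * (Uᴴ * V)) - U * symPart (Zᴴ * V)

/-- The tangent space to the Stiefel manifold at `U`, as a real submodule of
`ℂ^{n×r}`. -/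
def stiefelTangent {n r : ℕ} (U : Matrix (Fin n) (Fin r) ℂ) :
    Submodule ℝ (Matrix (Fin n) (Fin r) ℂ) where
  carrier := {Z | Uᴴ * Z + Zᴴ * U = 0}
  zero_mem' := by simp
  add_mem' := by
    intro a b ha hb
    simp only [Set.mem_setOf_eq] at ha hb ⊢
    have : Uᴴ * (a + b) + (a + b)ᴴ * U = (Uᴴ * a + aᴴ * U) + (Uᴴ * b + bᴴ * U) := by
      rw [Matrix.conjTranspose_add, Matrix.mul_add, Matrix.add_mul]; abel
    rw [this, ha, hb, add_zero]
  smul_mem' := by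
    intro c Z hZ
    simp only [Set.mem_setOf_eq] at hZ ⊢
    have : Uᴴ * (c • Z) + (c • Z)ᴴ * U = c • (Uᴴ * Z + Zᴴ * U) := by
      rw [Matrix.conjTranspose_smul, star_trivial, Matrix.mul_smul, Matrix.smul_mul, smul_add]
    rw [this, hZ, smul_zero]

attribute [local instance] Matrix.frobeniusNormedAddCommGroup Matrix.frobeniusNormedSpace

namespace Matrix

theorem conjTranspose_single_sub_single {k : Type*} [DecidableEq k] (p q : k) :
    (single p q (1 : ℂ) - single q p 1)ᴴ = -(single p q (1 : ℂ) - single q p 1) := by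
  simp [conjTranspose_sub]

theorem conjTranspose_I_smul_single_add_single {k : Type*} [DecidableEq k] (p q : k) :
    (Complex.I • (single p q (1 : ℂ) + single q p 1))ᴴ =
      -(Complex.I • (single p q (1 : ℂ) + single q p 1)) := by
  simp [conjTranspose_add, add_comm, single_neg]

variable {m k : Type*} [Fintype m] [Fintype k]

open scoped ComplexOrder in
theorem eq_zero_of_re_trace_conjTranspose_mul_self_eq_zero {A : Matrix m k ℂ}
    (hA : (Aᴴ * A).trace.re = 0) : A = 0 := by
  have hnonneg := (posSemidef_conjTranspose_mul_self A).trace_nonneg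
  rw [← trace_conjTranspose_mul_self_eq_zero_iff, Complex.ext_iff]
  exact ⟨hA, (Complex.nonneg_iff.mp hnonneg).2.symm⟩

theorem ext_of_re_trace_conjTranspose_mul {A B : Matrix m k ℂ}
    (h : ∀ Z : Matrix m k ℂ, (Aᴴ * Z).trace.re = (Bᴴ * Z).trace.re) : A = B := by
  rw [← sub_eq_zero]
  apply eq_zero_of_re_trace_conjTranspose_mul_self_eq_zero
  rw [conjTranspose_sub, Matrix.sub_mul, trace_sub, Complex.sub_re, h, sub_self]

variable [DecidableEq k]

open scoped Norms.Frobenius in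
theorem exp_smul_mem_unitary {Ω : Matrix k k ℂ} (hΩ : Ωᴴ = -Ω) (t : ℝ) :
    (NormedSpace.exp (t • Ω))ᴴ * NormedSpace.exp (t • Ω) = 1 :=
  (NormedSpace.exp_mem_unitary_of_mem_skewAdjoint <| by
    rw [skewAdjoint.mem_iff, star_eq_conjTranspose, conjTranspose_smul, hΩ, star_trivial,
      smul_neg]).1

open scoped Norms.Frobenius in
theorem hasDerivAt_exp_smul_zero (Ω : Matrix k k ℂ) :
    HasDerivAt (fun t : ℝ => NormedSpace.exp (t • Ω)) Ω 0 := by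
  have h := hasDerivAt_exp_smul_const (𝕂 := ℝ) Ω 0
  rwa [zero_smul, NormedSpace.exp_zero, Matrix.one_mul] at h

def mulRightUnitaryCLE {R : Matrix k k ℂ} (hR : Rᴴ * R = 1) :
    Matrix m k ℂ ≃L[ℝ] Matrix m k ℂ :=
  LinearEquiv.toContinuousLinearEquiv <|
    LinearEquiv.ofLinearMap (mulRightLinearMap m ℝ R) (mulRightLinearMap m ℝ Rᴴ)
      (LinearMap.ext fun X => by simp [Matrix.mul_assoc, hR])
      (LinearMap.ext fun X => by simp [Matrix.mul_assoc, mul_eq_one_comm.mp hR])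

theorem finrank_ker_mulLeftLinearMap_conjTranspose {U : Matrix m k ℂ} (hU : Uᴴ * U = 1) :
    Module.finrank ℝ (LinearMap.ker (mulLeftLinearMap k ℝ Uᴴ)) =
      2 * Fintype.card k * (Fintype.card m - Fintype.card k) := by
  have hsurj : Function.Surjective (mulLeftLinearMap k ℝ Uᴴ) := fun A =>
    ⟨U * A, by rw [mulLeftLinearMap_apply, ← Matrix.mul_assoc, hU, Matrix.one_mul]⟩
  have hrank := LinearMap.finrank_range_add_finrank_ker (mulLeftLinearMap k ℝ Uᴴ)
  rw [LinearMap.range_eq_top.mpr hsurj, finrank_top, Module.finrank_matrix,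
    Module.finrank_matrix, Complex.finrank_real_complex] at hrank
  rw [Nat.mul_sub]
  apply Nat.eq_sub_of_add_eq
  linarith

end Matrix

section Gradient

variable {m k : Type*} [Fintype m] [Fintype k] [DecidableEq k]
  {h : Matrix m k ℂ → ℝ} {g : Matrix m k ℂ → Matrix m k ℂ}

theorem grad_mul_unitary (hg : ∀ W Z, fderiv ℝ h W Z = ((g W)ᴴ * Z).trace.re)
    (hinv : ∀ W (R : Matrix k k ℂ), Rᴴ * R = 1 → h (W * R) = h W)
    (W : Matrix m k ℂ) {R : Matrix k k ℂ} (hR : Rᴴ * R = 1) :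
    g (W * R) = g W * R := by
  have hfd : fderiv ℝ (fun X => h (X * R)) W =
      (fderiv ℝ h (W * R)).comp
        (mulRightUnitaryCLE (m := m) hR : Matrix m k ℂ →L[ℝ] Matrix m k ℂ) :=
    (mulRightUnitaryCLE hR).comp_right_fderiv (f := h) (x := W)
  simp only [hinv _ R hR] at hfd
  refine ext_of_re_trace_conjTranspose_mul fun Z => ?_
  calc ((g (W * R))ᴴ * Z).trace.re = fderiv ℝ h (W * R) (Z * Rᴴ * R) := by
        rw [Matrix.mul_assoc, hR, Matrix.mul_one, hg]
    _ = fderiv ℝ h W (Z * Rᴴ) := by rw [hfd]; rfl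
    _ = ((g W * R)ᴴ * Z).trace.re := by
        rw [hg, conjTranspose_mul, ← Matrix.mul_assoc, trace_mul_comm, Matrix.mul_assoc]

theorem fderiv_mul_skew_of_mul_unitary {U : Matrix m k ℂ} (hg : DifferentiableAt ℝ g U)
    (hequiv : ∀ R : Matrix k k ℂ, Rᴴ * R = 1 → g (U * R) = g U * R)
    {Ω : Matrix k k ℂ} (hΩ : Ωᴴ = -Ω) :
    fderiv ℝ g U (U * Ω) = g U * Ω := by
  have hmul (A : Matrix m k ℂ) :
      HasDerivAt (fun t : ℝ => A * NormedSpace.exp (t • Ω)) (A * Ω) 0 :=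
    (mulLeftLinearMap k ℝ A).toContinuousLinearMap.hasFDerivAt.comp_hasDerivAt 0
      (hasDerivAt_exp_smul_zero Ω)
  have hcomp : HasDerivAt (fun t : ℝ => g (U * NormedSpace.exp (t • Ω)))
      (fderiv ℝ g U (U * Ω)) 0 :=
    hg.hasFDerivAt.comp_hasDerivAt_of_eq 0 (hmul U) (by simp)
  have horbit : (fun t : ℝ => g (U * NormedSpace.exp (t • Ω))) =
      fun t => g U * NormedSpace.exp (t • Ω) :=
    funext fun t => hequiv _ (exp_smul_mem_unitary hΩ t)
  rw [horbit] at hcomp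
  exact hcomp.unique (hmul (g U))

end Gradient

section Stiefel

variable {n r : ℕ} {U : Matrix (Fin n) (Fin r) ℂ}

theorem conjTranspose_symPart (A : Matrix (Fin r) (Fin r) ℂ) : (symPart A)ᴴ = symPart A := by
  rw [symPart, conjTranspose_smul, conjTranspose_add, conjTranspose_conjTranspose, add_comm]
  norm_num

theorem stiefelProj_mul_add_weingarten_eq_zero (hU : Uᴴ * U = 1)
    {S Ω : Matrix (Fin r) (Fin r) ℂ} (hS : Sᴴ = S) (hΩ : Ωᴴ = -Ω) :
    stiefelProj U (U * S * Ω) + weingarten U (U * Ω) (U * S) = 0 := by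
  have hUS : Uᴴ * (U * S) = S := by rw [← Matrix.mul_assoc, hU, Matrix.one_mul]
  have hUSΩ : Uᴴ * (U * S * Ω) = S * Ω := by rw [← Matrix.mul_assoc, hUS]
  have hΩS : (U * Ω)ᴴ * (U * S) = -(Ω * S) := by
    rw [conjTranspose_mul, Matrix.mul_assoc, hUS, hΩ, Matrix.neg_mul]
  have hSΩ : (S * Ω)ᴴ = -(Ω * S) := by rw [conjTranspose_mul, hS, hΩ, Matrix.neg_mul]
  have hΩS' : (-(Ω * S))ᴴ = S * Ω := by
    rw [conjTranspose_neg, conjTranspose_mul, hS, hΩ, Matrix.mul_neg, neg_neg]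
  rw [stiefelProj, weingarten, hUSΩ, hUS, hΩS, symPart, symPart, hSΩ, hΩS', Matrix.mul_smul,
    Matrix.mul_smul, Matrix.mul_add, Matrix.mul_add, Matrix.mul_neg, Matrix.mul_assoc U S Ω,
    Matrix.mul_assoc U Ω S]
  module

theorem conjTranspose_mul_eq_neg_of_mem_stiefelTangent {Z : Matrix (Fin n) (Fin r) ℂ}
    (hZ : Z ∈ stiefelTangent U) : (Uᴴ * Z)ᴴ = -(Uᴴ * Z) := by
  rw [conjTranspose_mul, conjTranspose_conjTranspose]
  exact eq_neg_of_add_eq_zero_right hZ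

theorem finrank_range_domRestrict_stiefelTangent_le {M : Type*} [AddCommGroup M] [Module ℝ M]
    (hU : Uᴴ * U = 1)
    (H : Matrix (Fin n) (Fin r) ℂ →ₗ[ℝ] M)
    (hH : ∀ Ω : Matrix (Fin r) (Fin r) ℂ, Ωᴴ = -Ω → H (U * Ω) = 0) :
    Module.finrank ℝ (LinearMap.range (H.domRestrict (stiefelTangent U))) ≤
      2 * r * (n - r) := by
  have hle : LinearMap.range (H.domRestrict (stiefelTangent U)) ≤
      (LinearMap.ker (mulLeftLinearMap (Fin r) ℝ Uᴴ)).map H := by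
    rintro _ ⟨⟨Z, hZ⟩, rfl⟩
    refine ⟨Z - U * (Uᴴ * Z), LinearMap.mem_ker.mpr ?_, ?_⟩
    · rw [mulLeftLinearMap_apply, Matrix.mul_sub, ← Matrix.mul_assoc, hU,
        Matrix.one_mul, sub_self]
    · rw [map_sub, hH _ (conjTranspose_mul_eq_neg_of_mem_stiefelTangent hZ), sub_zero]
      rfl
  calc _ ≤ Module.finrank ℝ ((LinearMap.ker (mulLeftLinearMap (Fin r) ℝ Uᴴ)).map H) :=
        Submodule.finrank_mono hle
    _ ≤ Module.finrank ℝ (LinearMap.ker (mulLeftLinearMap (Fin r) ℝ Uᴴ)) :=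
        Submodule.finrank_map_le _ _
    _ = 2 * r * (n - r) := by
        rw [finrank_ker_mulLeftLinearMap_conjTranspose hU, Fintype.card_fin, Fintype.card_fin]

end Stiefel

theorem unitarily_invariant_hessian_degenerate_general (n r : ℕ)
    (h : Matrix (Fin n) (Fin r) ℂ → ℝ)
    (g : Matrix (Fin n) (Fin r) ℂ → Matrix (Fin n) (Fin r) ℂ)
    (hg : ∀ U Z, fderiv ℝ h U Z = (((g U)ᴴ * Z).trace).re)
    (hgdiff : Differentiable ℝ g)
    (U : Matrix (Fin n) (Fin r) ℂ) (hU : Uᴴ * U = 1)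
    (hinv : ∀ (W : Matrix (Fin n) (Fin r) ℂ) (R : Matrix (Fin r) (Fin r) ℂ),
      Rᴴ * R = 1 → h (W * R) = h W)
    (hstat : g U - U * symPart (Uᴴ * g U) = 0)
    (𝓗 : Matrix (Fin n) (Fin r) ℂ →ₗ[ℝ] Matrix (Fin n) (Fin r) ℂ)
    (h𝓗 : ∀ Z, 𝓗 Z =
      stiefelProj U (fderiv ℝ g U Z) + weingarten U Z (U * symPart (Uᴴ * g U))) :
    (∀ p q : Fin r, p < q →
        𝓗 (Complex.I • (U * (Matrix.single p q (1 : ℂ) +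
            Matrix.single q p (1 : ℂ)))) = 0 ∧
        𝓗 (U * (Matrix.single p q (1 : ℂ) -
            Matrix.single q p (1 : ℂ))) = 0) ∧
      Module.finrank ℝ ↥(LinearMap.range (𝓗.domRestrict (stiefelTangent U))) ≤
        2 * r * (n - r) := by
  set S := symPart (Uᴴ * g U)
  have hgU : g U = U * S := sub_eq_zero.mp hstat
  have hker : ∀ Ω : Matrix (Fin r) (Fin r) ℂ, Ωᴴ = -Ω → 𝓗 (U * Ω) = 0 := by
    intro Ω hΩ
    rw [h𝓗, fderiv_mul_skew_of_mul_unitary (hgdiff U) (fun _ hR => grad_mul_unitary hg hinv U hR)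
      hΩ, hgU]
    exact stiefelProj_mul_add_weingarten_eq_zero hU (conjTranspose_symPart _) hΩ
  refine ⟨fun p q _ => ⟨?_, hker _ (conjTranspose_single_sub_single p q)⟩,
    finrank_range_domRestrict_stiefelTangent_le hU 𝓗 hker⟩
  rw [← Matrix.mul_smul]
  exact hker _ (conjTranspose_I_smul_single_add_single p q)

/-- If `h` is unitarily invariant (invariant under right multiplication by
unitary matrices) and `U` is a stationary point, then for all `p < q` the
tangent vectors `Z_{p,q} = i·U(e_p e_qᵀ + e_q e_pᵀ)` and
`Z'_{p,q} = U(e_p e_qᵀ − e_q e_pᵀ)` lie in the kernel of the Riemannian Hessian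
`𝓗[Z] = Proj_U(∇²h(U)[Z]) + A_U(Z, Proj⊥_U ∇h(U))`; consequently the rank of
the Hessian on the tangent space is at most `2r(n−r)`. -/
theorem unitarily_invariant_hessian_degenerate (n r : ℕ)
    (h : Matrix (Fin n) (Fin r) ℂ → ℝ)
    (g : Matrix (Fin n) (Fin r) ℂ → Matrix (Fin n) (Fin r) ℂ)
    (hsmooth : ContDiff ℝ 2 h)
    (hg : ∀ U Z, fderiv ℝ h U Z = (((g U)ᴴ * Z).trace).re)
    (hgdiff : Differentiable ℝ g)
    (U : Matrix (Fin n) (Fin r) ℂ) (hU : Uᴴ * U = 1)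
    (hinv : ∀ (W : Matrix (Fin n) (Fin r) ℂ) (R : Matrix (Fin r) (Fin r) ℂ),
      Rᴴ * R = 1 → h (W * R) = h W)
    (hstat : g U - U * symPart (Uᴴ * g U) = 0)
    (𝓗 : Matrix (Fin n) (Fin r) ℂ →ₗ[ℝ] Matrix (Fin n) (Fin r) ℂ)
    (h𝓗 : ∀ Z, 𝓗 Z =
      stiefelProj U (fderiv ℝ g U Z) + weingarten U Z (U * symPart (Uᴴ * g U))) :
    (∀ p q : Fin r, p < q →
        𝓗 (Complex.I • (U * (Matrix.single p q (1 : ℂ) +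
            Matrix.single q p (1 : ℂ)))) = 0 ∧
        𝓗 (U * (Matrix.single p q (1 : ℂ) -
            Matrix.single q p (1 : ℂ))) = 0) ∧
      Module.finrank ℝ ↥(LinearMap.range (𝓗.domRestrict (stiefelTangent U))) ≤
        2 * r * (n - r) :=
  unitarily_invariant_hessian_degenerate_general n r h g hg hgdiff U hU hinv hstat 𝓗 h𝓗

end
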